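/- Let p and q be positive integers, and let G̃ be the group with presentation < a, b, t | t a^p t^{-1} = b^{-1} a^p, t b^{q} a^{-1} t^{-1} = b^{q}, [b^{-q}, a^p] = 1, [a, b] = 1 > (i.e. the group G_{p,-q} with the additional relation that a and b commute). Then there exist positive integers k, n, m such that (t^{k} a^{(pq)^{k}} t^{-k})^{n} · a^{m (pq)^{k}} · (t^{-k} a^{(pq)^{k}} t^{k})^{n} = 1 holds in G̃; in particular 1 lies in <<a>>^+ in G̃. -/
import Mathlib


/-- The set of conjugates `h⁻¹ * g * h` of an element `g` of a group. -/
def conjSet {G : Type*} [Group G] (g : G) : Set G := {x | ∃ h : G, x = h⁻¹ * g * h}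

/-- `<<g>>^+`: the subsemigroup generated by all conjugates of `g`. -/
def ggP {G : Type*} [Group G] (g : G) : Subsemigroup G := Subsemigroup.closure (conjSet g)

/-- The relators of the presentation
`< a, b, t | t a^p t⁻¹ = b⁻¹ a^p, t b^q a⁻¹ t⁻¹ = b^q, [b^{-q}, a^p] = 1, [a, b] = 1 >`
(the group `G_{p,-q}` with the extra relation that `a` and `b` commute), where `a`, `b`,
`t` are the generators `0`, `1`, `2` respectively, and `[g,h] = g⁻¹ h⁻¹ g h`. -/
def gtildeRels (p q : ℤ) : Set (FreeGroup (Fin 3)) :=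
  let a : FreeGroup (Fin 3) := FreeGroup.of 0
  let b : FreeGroup (Fin 3) := FreeGroup.of 1
  let t : FreeGroup (Fin 3) := FreeGroup.of 2
  { t * a ^ p * t⁻¹ * (b⁻¹ * a ^ p)⁻¹,
    t * b ^ q * a⁻¹ * t⁻¹ * (b ^ q)⁻¹,
    (b ^ (-q))⁻¹ * (a ^ p)⁻¹ * b ^ (-q) * a ^ p,
    a⁻¹ * b⁻¹ * a * b }

/-- The group `G̃ = G_{p,-q} / ⟨[a,b]⟩`. -/
abbrev Gtilde (p q : ℤ) := PresentedGroup (gtildeRels p q)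

/- ### auxiliary: membership lemmas for `ggP` -/

lemma gt_pow_mem {G : Type*} [Monoid G] (S : Subsemigroup G) {x : G} (hx : x ∈ S) :
    ∀ n : ℕ, 0 < n → x ^ n ∈ S := by
  intro n hn
  induction n with
  | zero => omega
  | succ n ih =>
    rcases Nat.eq_zero_or_pos n with h0 | h0
    · subst h0; simpa using hx
    · rw [pow_succ]; exact S.mul_mem (ih h0) hx

lemma gt_zpow_mem {G : Type*} [Group G] (S : Subsemigroup G) {x : G} (hx : x ∈ S)
    (E : ℤ) (hE : 0 < E) : x ^ E ∈ S := by
  obtain ⟨n, rfl⟩ := Int.eq_ofNat_of_zero_le hE.le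
  rw [zpow_natCast]
  exact gt_pow_mem S hx n (by exact_mod_cast hE)

lemma gt_self_mem {G : Type*} [Group G] (g : G) : g ∈ ggP g :=
  Subsemigroup.subset_closure ⟨1, by group⟩

lemma gt_conj_mem {G : Type*} [Group G] (g h : G) {x : G} (hx : x ∈ ggP g) :
    h⁻¹ * x * h ∈ ggP g := by
  induction hx using Subsemigroup.closure_induction with
  | mem x hx =>
    obtain ⟨s, rfl⟩ := hx
    exact Subsemigroup.subset_closure ⟨s * h, by group⟩
  | mul x y hx hy ihx ihy =>
    have e : h⁻¹ * (x * y) * h = (h⁻¹ * x * h) * (h⁻¹ * y * h) := by group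
    rw [e]; exact Subsemigroup.mul_mem _ ihx ihy

/- ### the integer sequence `(c_k, f_k)` with `t^k a^{(pq)^k} t^{-k} = a^{c_k} b^{q f_k}` -/

def gtCF (p q : ℤ) : ℕ → ℤ × ℤ
  | 0 => (1, 0)
  | (k+1) =>
      ((p * q) * (gtCF p q k).1 + (p * q) * (gtCF p q k).2,
       -(gtCF p q k).1 + (p * q - 1) * (gtCF p q k).2)

lemma gtCF_rec1 (p q : ℤ) (k : ℕ) :
    (gtCF p q (k+2)).1 = (2*(p*q) - 1) * (gtCF p q (k+1)).1 - (p*q)^2 * (gtCF p q k).1 := by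
  simp only [gtCF]; ring

lemma gtCF_rec2 (p q : ℤ) (k : ℕ) :
    (gtCF p q (k+2)).2 = (2*(p*q) - 1) * (gtCF p q (k+1)).2 - (p*q)^2 * (gtCF p q k).2 := by
  simp only [gtCF]; ring

/-- Since `2 c_k + f_k = tr(N^k) = 2 (pq)^k cos(kθ)` with `cos θ = 1 - 1/(2pq)`,
`0 < θ < π/2`, there is `k ≥ 1` with `2 c_k + f_k < 0`. -/
lemma gtCF_exists_neg (p q : ℤ) (hp : 0 < p) (hq : 0 < q) :
    ∃ k : ℕ, 0 < k ∧ 2 * (gtCF p q k).1 + (gtCF p q k).2 < 0 := by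
  have hr : (1 : ℝ) ≤ ((p * q : ℤ) : ℝ) := by
    have h : (1 : ℤ) ≤ p * q := by nlinarith
    exact_mod_cast h
  set r : ℝ := ((p * q : ℤ) : ℝ) with hrdef
  have hr0 : (0 : ℝ) < r := by linarith
  have hx2 : (1/2 : ℝ) ≤ 1 - 1/(2*r) := by
    have : 1/(2*r) ≤ 1/2 := by
      apply div_le_div_of_nonneg_left <;> linarith
    linarith
  have hx1 : (1 : ℝ) - 1/(2*r) < 1 := by
    have : 0 < 1/(2*r) := by positivity
    linarith
  set θ := Real.arccos (1 - 1/(2*r)) with hθdef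
  have hcos : Real.cos θ = 1 - 1/(2*r) := Real.cos_arccos (by linarith) (by linarith)
  have hθpos : 0 < θ := Real.arccos_pos.mpr hx1
  have hθlt : θ < Real.pi / 2 := by
    by_contra h
    push_neg at h
    have hle : θ ≤ Real.pi + Real.pi/2 := by
      have h1 := Real.arccos_le_pi (1 - 1/(2*r))
      have h2 := Real.pi_pos
      rw [hθdef]
      linarith
    have := Real.cos_nonpos_of_pi_div_two_le_of_le h hle
    linarith
  have key : ∀ k : ℕ,
      ((2 * (gtCF p q k).1 + (gtCF p q k).2 : ℤ) : ℝ) = 2 * r ^ k * Real.cos (k * θ) := by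
    intro k
    induction k using Nat.strong_induction_on with
    | _ k ih =>
      match k with
      | 0 => simp [gtCF]
      | 1 =>
        have h : ((2 * (gtCF p q 1).1 + (gtCF p q 1).2 : ℤ) : ℝ) = 2 * r - 1 := by
          simp only [gtCF]
          push_cast [hrdef]
          ring
        rw [h]
        simp only [Nat.cast_one, one_mul, pow_one, hcos]
        field_simp
      | (n+2) =>
        have h0 := ih n (by omega)
        have h1 := ih (n+1) (by omega)
        have hrec : ((2 * (gtCF p q (n+2)).1 + (gtCF p q (n+2)).2 : ℤ) : ℝ)
            = (2*r - 1) * ((2 * (gtCF p q (n+1)).1 + (gtCF p q (n+1)).2 : ℤ) : ℝ)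
              - r^2 * ((2 * (gtCF p q n).1 + (gtCF p q n).2 : ℤ) : ℝ) := by
          rw [gtCF_rec1, gtCF_rec2]
          push_cast [hrdef]
          ring
        rw [hrec, h0, h1]
        have htrig : Real.cos (((n:ℝ)+2) * θ) = 2 * Real.cos θ * Real.cos (((n:ℝ)+1) * θ)
            - Real.cos ((n:ℝ) * θ) := by
          have e1 : ((n:ℝ)+2) * θ = ((n:ℝ)+1) * θ + θ := by ring
          have e2 : (n:ℝ) * θ = ((n:ℝ)+1) * θ - θ := by ring
          rw [e1, e2, Real.cos_add, Real.cos_sub]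
          ring
        push_cast
        rw [htrig, hcos]
        field_simp
        ring
  set k : ℕ := ⌈(Real.pi/2) / θ⌉₊ + 1 with hkdef
  have hk1 : Real.pi/2 < k * θ := by
    have h1 : (Real.pi/2) / θ < (k : ℝ) := by
      calc (Real.pi/2) / θ ≤ (⌈(Real.pi/2) / θ⌉₊ : ℝ) := Nat.le_ceil _
        _ < (k : ℝ) := by rw [hkdef]; push_cast; linarith
    calc Real.pi/2 = ((Real.pi/2) / θ) * θ := by
          rw [div_mul_cancel₀]
          exact ne_of_gt hθpos
      _ < (k : ℝ) * θ := mul_lt_mul_of_pos_right h1 hθpos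
  have hk2 : (k : ℝ) * θ < Real.pi + Real.pi/2 := by
    have h1 : (k : ℝ) < (Real.pi/2) / θ + 2 := by
      rw [hkdef]
      push_cast
      have := Nat.ceil_lt_add_one (by positivity : (0:ℝ) ≤ (Real.pi/2) / θ)
      linarith
    have h2 : (k : ℝ) * θ < ((Real.pi/2) / θ + 2) * θ := mul_lt_mul_of_pos_right h1 hθpos
    have h3 : ((Real.pi/2) / θ + 2) * θ = Real.pi/2 + 2*θ := by
      rw [add_mul, div_mul_cancel₀]
      exact ne_of_gt hθpos
    rw [h3] at h2
    linarith
  have hcosneg : Real.cos ((k : ℝ) * θ) < 0 :=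
    Real.cos_neg_of_pi_div_two_lt_of_lt hk1 hk2
  refine ⟨k, by omega, ?_⟩
  have h := key k
  have hlt : ((2 * (gtCF p q k).1 + (gtCF p q k).2 : ℤ) : ℝ) < 0 := by
    rw [h]
    have hpow : (0:ℝ) < r ^ k := by positivity
    nlinarith
  exact_mod_cast hlt

/- ### abstract group computations -/

section Abstract
variable {G : Type*} [Group G] {p q : ℤ} {a b t : G}

lemma gt_A_mul (hab : Commute a b) (u v u' v' : ℤ) :
    (a ^ u * b ^ v) * (a ^ u' * b ^ v') = a ^ (u + u') * b ^ (v + v') := by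
  rw [(hab.symm.zpow_zpow v u').mul_mul_mul_comm, ← zpow_add, ← zpow_add]

lemma gt_A_pow (hab : Commute a b) (u v : ℤ) (n : ℕ) :
    (a ^ u * b ^ v) ^ n = a ^ (u * (n : ℤ)) * b ^ (v * (n : ℤ)) := by
  rw [(hab.zpow_zpow u v).mul_pow, zpow_mul, zpow_mul, zpow_natCast, zpow_natCast]

lemma gt_A_zpow (hab : Commute a b) (u v w : ℤ) :
    (a ^ u * b ^ v) ^ w = a ^ (u * w) * b ^ (v * w) := by
  rw [(hab.zpow_zpow u v).mul_zpow, ← zpow_mul, ← zpow_mul]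

lemma gt_conj_gen (s u : G) (n : ℤ) : s * u ^ n * s⁻¹ = (s * u * s⁻¹) ^ n := by
  simpa [MulAut.conj_apply] using (map_zpow (MulAut.conj s) u n).symm

lemma gt_conj (hab : Commute a b)
    (R1 : t * a ^ p * t⁻¹ = b⁻¹ * a ^ p)
    (R2 : t * (b ^ q * a⁻¹) * t⁻¹ = b ^ q) (x y : ℤ) :
    t * (a ^ (p * x - y) * b ^ (q * y)) * t⁻¹ = a ^ (p * x) * b ^ (q * y - x) := by
  have h1 : (a ^ p) ^ x * (b ^ q * a⁻¹) ^ y = a ^ (p * x - y) * b ^ (q * y) := by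
    have hc : Commute (b ^ q) a⁻¹ := (hab.symm.inv_right).zpow_left q
    rw [hc.mul_zpow, ← zpow_mul, ← zpow_mul, inv_zpow, ← zpow_neg,
      (hab.zpow_zpow (-y) (q * y)).symm.eq, ← mul_assoc, ← zpow_add]
    ring_nf
  have h3 : (b⁻¹ * a ^ p) ^ x = a ^ (p * x) * b ^ (-x) := by
    have hc : Commute b⁻¹ (a ^ p) := ((hab.symm).zpow_right p).inv_left
    rw [hc.mul_zpow, ← zpow_mul, inv_zpow, ← zpow_neg,
      (hab.zpow_zpow (p * x) (-x)).symm.eq]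
  calc t * (a ^ (p * x - y) * b ^ (q * y)) * t⁻¹
      = (t * (a ^ p) ^ x * t⁻¹) * (t * (b ^ q * a⁻¹) ^ y * t⁻¹) := by
        rw [← h1]; group
    _ = (t * a ^ p * t⁻¹) ^ x * (t * (b ^ q * a⁻¹) * t⁻¹) ^ y := by
        rw [gt_conj_gen t (a ^ p) x, gt_conj_gen t (b ^ q * a⁻¹) y]
    _ = (a ^ (p * x) * b ^ (-x)) * (b ^ q) ^ y := by rw [R1, R2, h3]
    _ = a ^ (p * x) * b ^ (q * y - x) := by
        rw [← zpow_mul, mul_assoc, ← zpow_add]; ring_nf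

lemma gt_conj' (hab : Commute a b)
    (R1 : t * a ^ p * t⁻¹ = b⁻¹ * a ^ p)
    (R2 : t * (b ^ q * a⁻¹) * t⁻¹ = b ^ q) (x y : ℤ) :
    t⁻¹ * (a ^ (p * x) * b ^ (q * y - x)) * t = a ^ (p * x - y) * b ^ (q * y) := by
  rw [← gt_conj hab R1 R2 x y]
  group

lemma gt_pos_word (hab : Commute a b)
    (R1 : t * a ^ p * t⁻¹ = b⁻¹ * a ^ p)
    (R2 : t * (b ^ q * a⁻¹) * t⁻¹ = b ^ q) (k : ℕ) :
    t ^ (k : ℤ) * a ^ ((p * q) ^ k) * t ^ (-(k : ℤ))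
      = a ^ (gtCF p q k).1 * b ^ (q * (gtCF p q k).2) := by
  induction k with
  | zero => simp [gtCF]
  | succ k ih =>
    set c := (gtCF p q k).1 with hc
    set f := (gtCF p q k).2 with hf
    have e1 : (gtCF p q (k+1)).1 = p * (q * (c + f)) := by
      simp only [gtCF, ← hc, ← hf]; ring
    have e2 : q * (gtCF p q (k+1)).2 = q * (p * q * f) - q * (c + f) := by
      simp only [gtCF, ← hc, ← hf]; ring
    have e3 : c * (p * q) = p * (q * (c + f)) - p * q * f := by ring
    have e4 : (q * f) * (p * q) = q * (p * q * f) := by ring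
    calc t ^ ((k+1 : ℕ) : ℤ) * a ^ ((p * q) ^ (k+1)) * t ^ (-((k+1 : ℕ) : ℤ))
        = t * (t ^ (k : ℤ) * (a ^ ((p * q) ^ k)) ^ (p * q) * t ^ (-(k : ℤ))) * t⁻¹ := by
          rw [pow_succ, zpow_mul]
          push_cast
          group
      _ = t * ((t ^ (k : ℤ) * a ^ ((p * q) ^ k) * (t ^ (k : ℤ))⁻¹) ^ (p * q)) * t⁻¹ := by
          rw [← gt_conj_gen (t ^ (k : ℤ)) (a ^ ((p * q) ^ k)) (p * q), zpow_neg]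
      _ = t * ((a ^ c * b ^ (q * f)) ^ (p * q)) * t⁻¹ := by
          rw [← zpow_neg, ih]
      _ = t * (a ^ (c * (p * q)) * b ^ ((q * f) * (p * q))) * t⁻¹ := by
          rw [gt_A_zpow hab]
      _ = a ^ (p * (q * (c + f))) * b ^ (q * (p * q * f) - q * (c + f)) := by
          rw [e3, e4]
          exact gt_conj hab R1 R2 (q * (c + f)) (p * q * f)
      _ = a ^ (gtCF p q (k+1)).1 * b ^ (q * (gtCF p q (k+1)).2) := by
          rw [e1, e2]

lemma gt_neg_word (hab : Commute a b)
    (R1 : t * a ^ p * t⁻¹ = b⁻¹ * a ^ p)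
    (R2 : t * (b ^ q * a⁻¹) * t⁻¹ = b ^ q) (k : ℕ) :
    t ^ (-(k : ℤ)) * a ^ ((p * q) ^ k) * t ^ (k : ℤ)
      = a ^ ((gtCF p q k).1 + (gtCF p q k).2) * b ^ (-(q * (gtCF p q k).2)) := by
  induction k with
  | zero => simp [gtCF]
  | succ k ih =>
    set c := (gtCF p q k).1 with hc
    set f := (gtCF p q k).2 with hf
    have e1 : (gtCF p q (k+1)).1 + (gtCF p q (k+1)).2
        = p * (q * (c + f)) - (c + f - p * q * f) := by
      simp only [gtCF, ← hc, ← hf]; ring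
    have e2 : -(q * (gtCF p q (k+1)).2) = q * (c + f - p * q * f) := by
      simp only [gtCF, ← hc, ← hf]; ring
    have e3 : (c + f) * (p * q) = p * (q * (c + f)) := by ring
    have e4 : (-(q * f)) * (p * q) = q * (c + f - p * q * f) - q * (c + f) := by ring
    calc t ^ (-((k+1 : ℕ) : ℤ)) * a ^ ((p * q) ^ (k+1)) * t ^ ((k+1 : ℕ) : ℤ)
        = t⁻¹ * (t ^ (-(k : ℤ)) * (a ^ ((p * q) ^ k)) ^ (p * q) * t ^ (k : ℤ)) * t := by
          rw [pow_succ, zpow_mul]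
          push_cast
          group
      _ = t⁻¹ * ((t ^ (-(k : ℤ)) * a ^ ((p * q) ^ k) * (t ^ (-(k : ℤ)))⁻¹) ^ (p * q)) * t := by
          rw [← gt_conj_gen (t ^ (-(k : ℤ))) (a ^ ((p * q) ^ k)) (p * q), zpow_neg, inv_inv]
      _ = t⁻¹ * ((a ^ (c + f) * b ^ (-(q * f))) ^ (p * q)) * t := by
          rw [zpow_neg, inv_inv, ← zpow_neg t (k : ℤ), ih]
      _ = t⁻¹ * (a ^ ((c + f) * (p * q)) * b ^ ((-(q * f)) * (p * q))) * t := by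
          rw [gt_A_zpow hab]
      _ = a ^ (p * (q * (c + f)) - (c + f - p * q * f)) * b ^ (q * (c + f - p * q * f)) := by
          rw [e3, e4]
          exact gt_conj' hab R1 R2 (q * (c + f)) (c + f - p * q * f)
      _ = a ^ ((gtCF p q (k+1)).1 + (gtCF p q (k+1)).2) * b ^ (-(q * (gtCF p q (k+1)).2)) := by
          rw [e1, e2]

end Abstract

/- ### the relations in `Gtilde p q` -/

lemma gtilde_relations (p q : ℤ) :
    (PresentedGroup.of (rels := gtildeRels p q) 0) * PresentedGroup.of 1
        = PresentedGroup.of 1 * PresentedGroup.of 0 ∧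
    (PresentedGroup.of (rels := gtildeRels p q) 2) * (PresentedGroup.of 0) ^ p
          * (PresentedGroup.of 2)⁻¹
        = (PresentedGroup.of 1)⁻¹ * (PresentedGroup.of 0) ^ p ∧
    (PresentedGroup.of (rels := gtildeRels p q) 2)
          * ((PresentedGroup.of 1) ^ q * (PresentedGroup.of 0)⁻¹) * (PresentedGroup.of 2)⁻¹
        = (PresentedGroup.of 1) ^ q := by
  have hπ : ∀ r ∈ gtildeRels p q,
      (QuotientGroup.mk' (Subgroup.normalClosure (gtildeRels p q))) r = 1 :=
    fun r hr => (QuotientGroup.eq_one_iff r).mpr (Subgroup.subset_normalClosure hr)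
  set π := QuotientGroup.mk' (Subgroup.normalClosure (gtildeRels p q)) with hπdef
  have h4 := hπ ((FreeGroup.of 0)⁻¹ * (FreeGroup.of 1)⁻¹ * FreeGroup.of 0 * FreeGroup.of 1)
    (by simp [gtildeRels])
  have h1 := hπ (FreeGroup.of 2 * (FreeGroup.of 0 : FreeGroup (Fin 3)) ^ p
      * (FreeGroup.of 2)⁻¹ * ((FreeGroup.of 1)⁻¹ * (FreeGroup.of 0) ^ p)⁻¹)
    (by simp [gtildeRels])
  have h2 := hπ (FreeGroup.of 2 * (FreeGroup.of 1 : FreeGroup (Fin 3)) ^ q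
      * (FreeGroup.of 0)⁻¹ * (FreeGroup.of 2)⁻¹ * ((FreeGroup.of 1) ^ q)⁻¹)
    (by simp [gtildeRels])
  simp only [map_mul, map_inv, map_zpow] at h1 h2 h4
  refine ⟨?_, ?_, ?_⟩
  · show π (FreeGroup.of 0) * π (FreeGroup.of 1) = π (FreeGroup.of 1) * π (FreeGroup.of 0)
    calc π (FreeGroup.of 0) * π (FreeGroup.of 1)
        = π (FreeGroup.of 1) * π (FreeGroup.of 0) *
            ((π (FreeGroup.of 0))⁻¹ * (π (FreeGroup.of 1))⁻¹
              * π (FreeGroup.of 0) * π (FreeGroup.of 1)) := by group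
      _ = π (FreeGroup.of 1) * π (FreeGroup.of 0) := by rw [h4, mul_one]
  · show π (FreeGroup.of 2) * (π (FreeGroup.of 0)) ^ p * (π (FreeGroup.of 2))⁻¹
        = (π (FreeGroup.of 1))⁻¹ * (π (FreeGroup.of 0)) ^ p
    exact mul_inv_eq_one.mp h1
  · show π (FreeGroup.of 2) * ((π (FreeGroup.of 1)) ^ q * (π (FreeGroup.of 0))⁻¹)
          * (π (FreeGroup.of 2))⁻¹
        = (π (FreeGroup.of 1)) ^ q
    have h2' := mul_inv_eq_one.mp h2
    calc π (FreeGroup.of 2) * ((π (FreeGroup.of 1)) ^ q * (π (FreeGroup.of 0))⁻¹)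
          * (π (FreeGroup.of 2))⁻¹
        = π (FreeGroup.of 2) * (π (FreeGroup.of 1)) ^ q * (π (FreeGroup.of 0))⁻¹
            * (π (FreeGroup.of 2))⁻¹ := by group
      _ = (π (FreeGroup.of 1)) ^ q := h2'


/-- for positive integers `p`, `q`, there exist positive integers
`k`, `n`, `m` with
`(t^k a^{(pq)^k} t^{-k})^n · a^{m (pq)^k} · (t^{-k} a^{(pq)^k} t^k)^n = 1` in `G̃`;
in particular `1 ∈ <<a>>^+` in `G̃`. -/
theorem gtilde_relation (p q : ℤ) (hp : 0 < p) (hq : 0 < q) :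
    letI a : Gtilde p q := PresentedGroup.of 0
    letI t : Gtilde p q := PresentedGroup.of 2
    (∃ k n m : ℕ, 0 < k ∧ 0 < n ∧ 0 < m ∧
        (t ^ (k : ℤ) * a ^ ((p * q) ^ k) * t ^ (-(k : ℤ))) ^ n *
            a ^ ((m : ℤ) * (p * q) ^ k) *
            (t ^ (-(k : ℤ)) * a ^ ((p * q) ^ k) * t ^ (k : ℤ)) ^ n = 1) ∧
      (1 : Gtilde p q) ∈ ggP a := by
  obtain ⟨hab', R1, R2⟩ := gtilde_relations p q
  set A : Gtilde p q := PresentedGroup.of 0 with hA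
  set B : Gtilde p q := PresentedGroup.of 1 with hB
  set T : Gtilde p q := PresentedGroup.of 2 with hT
  have hab : Commute A B := hab'
  show (∃ k n m : ℕ, 0 < k ∧ 0 < n ∧ 0 < m ∧
        (T ^ (k : ℤ) * A ^ ((p * q) ^ k) * T ^ (-(k : ℤ))) ^ n *
            A ^ ((m : ℤ) * (p * q) ^ k) *
            (T ^ (-(k : ℤ)) * A ^ ((p * q) ^ k) * T ^ (k : ℤ)) ^ n = 1) ∧
      (1 : Gtilde p q) ∈ ggP A
  obtain ⟨k, hk, hneg⟩ := gtCF_exists_neg p q hp hq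
  have hpq : (0 : ℤ) < p * q := by positivity
  have hpqk : (0 : ℤ) < (p * q) ^ k := by positivity
  set c := (gtCF p q k).1 with hc
  set f := (gtCF p q k).2 with hf
  set n : ℕ := ((p * q) ^ k).toNat with hndef
  set m : ℕ := (-(2 * c + f)).toNat with hmdef
  have hn : ((n : ℕ) : ℤ) = (p * q) ^ k := Int.toNat_of_nonneg hpqk.le
  have hm : ((m : ℕ) : ℤ) = -(2 * c + f) := Int.toNat_of_nonneg (by linarith)
  have hnpos : 0 < n := by
    have : (0 : ℤ) < (n : ℤ) := hn ▸ hpqk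
    exact_mod_cast this
  have hmpos : 0 < m := by
    have : (0 : ℤ) < (m : ℤ) := hm ▸ (by linarith)
    exact_mod_cast this
  have W1 := gt_pos_word hab R1 R2 k
  have W2 := gt_neg_word hab R1 R2 k
  rw [← hc, ← hf] at W1 W2
  have hmid : A ^ ((m : ℤ) * (p * q) ^ k)
      = A ^ ((m : ℤ) * (p * q) ^ k) * B ^ (0 : ℤ) := by
    rw [zpow_zero, mul_one]
  have hrel : (T ^ (k : ℤ) * A ^ ((p * q) ^ k) * T ^ (-(k : ℤ))) ^ n *
      A ^ ((m : ℤ) * (p * q) ^ k) *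
      (T ^ (-(k : ℤ)) * A ^ ((p * q) ^ k) * T ^ (k : ℤ)) ^ n = 1 := by
    rw [W1, W2, gt_A_pow hab, gt_A_pow hab, hmid, gt_A_mul hab, gt_A_mul hab]
    have E1 : c * (n : ℤ) + (m : ℤ) * (p * q) ^ k + (c + f) * (n : ℤ) = 0 := by
      rw [hn, hm]; ring
    have E2 : q * f * (n : ℤ) + 0 + -(q * f) * (n : ℤ) = 0 := by ring
    rw [E1, E2, zpow_zero, zpow_zero, mul_one]
  refine ⟨⟨k, n, m, hk, hnpos, hmpos, hrel⟩, ?_⟩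
  -- membership part
  have hAmem : A ∈ ggP A := gt_self_mem A
  have hApow : ∀ E : ℤ, 0 < E → A ^ E ∈ ggP A := fun E hE => gt_zpow_mem _ hAmem E hE
  have hF1 : T ^ (k : ℤ) * A ^ ((p * q) ^ k) * T ^ (-(k : ℤ)) ∈ ggP A := by
    have e : T ^ (k : ℤ) * A ^ ((p * q) ^ k) * T ^ (-(k : ℤ))
        = (T ^ (-(k : ℤ)))⁻¹ * A ^ ((p * q) ^ k) * T ^ (-(k : ℤ)) := by group
    rw [e]
    exact gt_conj_mem A _ (hApow _ hpqk)
  have hF3 : T ^ (-(k : ℤ)) * A ^ ((p * q) ^ k) * T ^ (k : ℤ) ∈ ggP A := by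
    have e : T ^ (-(k : ℤ)) * A ^ ((p * q) ^ k) * T ^ (k : ℤ)
        = (T ^ (k : ℤ))⁻¹ * A ^ ((p * q) ^ k) * T ^ (k : ℤ) := by group
    rw [e]
    exact gt_conj_mem A _ (hApow _ hpqk)
  have hmidmem : A ^ ((m : ℤ) * (p * q) ^ k) ∈ ggP A := by
    apply hApow
    have : (0 : ℤ) < (m : ℤ) := hm ▸ (by linarith)
    positivity
  have : (T ^ (k : ℤ) * A ^ ((p * q) ^ k) * T ^ (-(k : ℤ))) ^ n *
      A ^ ((m : ℤ) * (p * q) ^ k) *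
      (T ^ (-(k : ℤ)) * A ^ ((p * q) ^ k) * T ^ (k : ℤ)) ^ n ∈ ggP A :=
    Subsemigroup.mul_mem _
      (Subsemigroup.mul_mem _ (gt_pow_mem _ hF1 n hnpos) hmidmem)
      (gt_pow_mem _ hF3 n hnpos)
  rwa [hrel] at this
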